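/- arXiv:2009.00882 — 2 statements merged into one kernel-verified Lean document; each statement's English description precedes it below -/
import Mathlib

section
/- Let q > 0 be a real number and let x be a real number with x > 2√q. Then ∑_{n₁=0}^∞ ∑_{n₂=0}^∞ q^{n₁+n₂+1}·(2n₁+1)!·(2n₂+1)! / ((n₁+n₂+1)·(n₁!)²·(n₂!)²) · x^{−2n₁−2n₂−4} + ∑_{n₁=1}^∞ ∑_{n₂=1}^∞ q^{n₁+n₂}·n₁·n₂·(2n₁)!·(2n₂)! / ((n₁+n₂)·(n₁!)²·(n₂!)²) · x^{−2n₁−2n₂−2} = q/(x²−4q)². (This is the diagonal value W₀₂(x,x;q) of the genus-zero two-point function.) -/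
/-- The even part of the diagonal genus-zero two-point series. -/
noncomputable def evenDiagTerm (q x : ℝ) (p : ℕ × ℕ) : ℝ :=
  q ^ (p.1 + p.2 + 1) * (Nat.factorial (2 * p.1 + 1) : ℝ) * (Nat.factorial (2 * p.2 + 1) : ℝ) /
    (((p.1 + p.2 + 1 : ℕ) : ℝ) * ((Nat.factorial p.1 : ℝ)) ^ 2 * ((Nat.factorial p.2 : ℝ)) ^ 2) *
    x ^ (-(2 * (p.1 : ℤ) + 2 * (p.2 : ℤ) + 4))

/-- The odd part of the diagonal genus-zero two-point series; the summation over
`n₁, n₂ ≥ 1` is written by reindexing `nᵢ = pᵢ + 1` over `(p₁, p₂) ∈ ℕ × ℕ`. -/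
noncomputable def oddDiagTerm (q x : ℝ) (p : ℕ × ℕ) : ℝ :=
  q ^ ((p.1 + 1) + (p.2 + 1)) * ((p.1 + 1 : ℕ) : ℝ) * ((p.2 + 1 : ℕ) : ℝ) *
      (Nat.factorial (2 * (p.1 + 1)) : ℝ) * (Nat.factorial (2 * (p.2 + 1)) : ℝ) /
    ((((p.1 + 1) + (p.2 + 1) : ℕ) : ℝ) * ((Nat.factorial (p.1 + 1) : ℝ)) ^ 2 *
      ((Nat.factorial (p.2 + 1) : ℝ)) ^ 2) *
    x ^ (-(2 * ((p.1 : ℤ) + 1) + 2 * ((p.2 : ℤ) + 1) + 2))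

/-!
Since `(2n+1)!/(n!)² = e(n) := (2n+1)·C(2n,n)` and `(n+1)·(2n+2)!/((n+1)!)² = 2·e(n)`, the summands
of both double series depend on `(n₁, n₂)` only through `n₁ + n₂` and the product `e(n₁)·e(n₂)`.
As `e(n)` is the coefficient of `tⁿ` in `(1-4t)^(-3/2)`, the antidiagonal sums of `e(n₁)·e(n₂)` are
those of `(1-4t)^(-3)`, namely `C(n+2,2)·4ⁿ`; this follows from the classical convolution
`∑_{i+j=n} C(2i,i)·C(2j,j) = 4ⁿ`. Summing along antidiagonals thus turns both series into
combinations of `∑ rⁿ` and `∑ (n+1)·rⁿ` with `r = 4q/x² < 1`, which add up to `q/(x²-4q)²`.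
-/

open Finset Nat

section Symmetrization

variable {R : Type*} [CommSemiring R] (a : ℕ → R) (n : ℕ)

theorem Finset.Nat.two_mul_sum_antidiagonal_snd_mul :
    2 * ∑ p ∈ antidiagonal n, (p.2 : R) * (a p.1 * a p.2)
      = n * ∑ p ∈ antidiagonal n, a p.1 * a p.2 := by
  have hswap : ∑ p ∈ antidiagonal n, (p.2 : R) * (a p.1 * a p.2)
      = ∑ p ∈ antidiagonal n, (p.1 : R) * (a p.1 * a p.2) := by
    rw [← Finset.Nat.sum_antidiagonal_swap]
    exact sum_congr rfl fun p _ => by simp only [Prod.fst_swap, Prod.snd_swap]; ring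
  rw [two_mul]
  nth_rw 2 [hswap]
  rw [← sum_add_distrib, mul_sum]
  refine sum_congr rfl fun p hp => ?_
  rw [← add_mul, ← Nat.cast_add, add_comm, mem_antidiagonal.mp hp]

theorem Finset.Nat.sum_antidiagonal_two_mul_snd_add_one_mul :
    ∑ p ∈ antidiagonal n, (2 * p.2 + 1 : R) * (a p.1 * a p.2)
      = (n + 1) * ∑ p ∈ antidiagonal n, a p.1 * a p.2 := by
  simp only [add_mul, mul_assoc, ← mul_sum, sum_add_distrib, one_mul,
    two_mul_sum_antidiagonal_snd_mul]

end Symmetrization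

namespace Nat

theorem sum_antidiagonal_centralBinom_mul (n : ℕ) :
    ∑ p ∈ antidiagonal n, centralBinom p.1 * centralBinom p.2 = 4 ^ n := by
  induction n with
  | zero => simp
  | succ n ih =>
    -- `(n+1)·S(n+1) = 2·∑_{i+j=n+1} j·C(2i,i)·C(2j,j)` by symmetry; shifting `j` and using
    -- `(j+1)·C(2j+2,j+1) = 2(2j+1)·C(2j,j)` turns the right side into `4(n+1)·S(n)`.
    have hshift : ∑ p ∈ antidiagonal (n + 1), p.2 * (centralBinom p.1 * centralBinom p.2)
        = 2 * ∑ p ∈ antidiagonal n, (2 * p.2 + 1) * (centralBinom p.1 * centralBinom p.2) := by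
      rw [Finset.Nat.sum_antidiagonal_succ', mul_sum]
      simp only [zero_mul, zero_add]
      refine sum_congr rfl fun p _ => ?_
      rw [mul_left_comm, succ_mul_centralBinom_succ]
      ring
    have h := Finset.Nat.two_mul_sum_antidiagonal_snd_mul centralBinom (n + 1)
    have h' := Finset.Nat.sum_antidiagonal_two_mul_snd_add_one_mul centralBinom n
    simp only [Nat.cast_id] at h h'
    rw [hshift, h', ih] at h
    refine Nat.eq_of_mul_eq_mul_left (Nat.add_one_pos n) ?_
    rw [← h]; ring

def oddCentralBinom (n : ℕ) : ℕ := (2 * n + 1) * centralBinom n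

theorem oddCentralBinom_zero : oddCentralBinom 0 = 1 := by simp [oddCentralBinom]

theorem oddCentralBinom_succ (n : ℕ) :
    oddCentralBinom (n + 1) = 4 * oddCentralBinom n + centralBinom (n + 1) := by
  rw [oddCentralBinom, oddCentralBinom,
    show (2 * (n + 1) + 1) * centralBinom (n + 1) = 2 * ((n + 1) * centralBinom (n + 1))
      + centralBinom (n + 1) by ring, succ_mul_centralBinom_succ]
  ring

theorem factorial_two_mul (n : ℕ) : (2 * n)! = centralBinom n * n ! ^ 2 := by
  rw [centralBinom, two_mul, ← add_choose_mul_factorial_mul_factorial]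
  ring

theorem factorial_two_mul_add_one (n : ℕ) : (2 * n + 1)! = oddCentralBinom n * n ! ^ 2 := by
  rw [factorial_succ, factorial_two_mul, oddCentralBinom]
  ring

theorem succ_mul_factorial_two_mul_succ (n : ℕ) :
    (n + 1) * (2 * (n + 1))! = 2 * oddCentralBinom n * (n + 1)! ^ 2 := by
  rw [factorial_two_mul, ← mul_assoc, succ_mul_centralBinom_succ, oddCentralBinom]
  ring

theorem sum_antidiagonal_centralBinom_mul_oddCentralBinom (n : ℕ) :
    ∑ p ∈ antidiagonal n, centralBinom p.1 * oddCentralBinom p.2 = (n + 1) * 4 ^ n := by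
  have h := Finset.Nat.sum_antidiagonal_two_mul_snd_add_one_mul centralBinom n
  simp only [Nat.cast_id] at h
  rw [← sum_antidiagonal_centralBinom_mul, ← h]
  exact sum_congr rfl fun p _ => by rw [oddCentralBinom]; ring

theorem two_mul_sum_antidiagonal_oddCentralBinom_mul (n : ℕ) :
    2 * ∑ p ∈ antidiagonal n, oddCentralBinom p.1 * oddCentralBinom p.2
      = (n + 1) * (n + 2) * 4 ^ n := by
  induction n with
  | zero => simp [oddCentralBinom_zero]
  | succ n ih =>
    have hrec : ∑ p ∈ antidiagonal (n + 1), oddCentralBinom p.1 * oddCentralBinom p.2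
        = 4 * ∑ p ∈ antidiagonal n, oddCentralBinom p.1 * oddCentralBinom p.2
          + ∑ p ∈ antidiagonal (n + 1), centralBinom p.1 * oddCentralBinom p.2 := by
      simp only [Finset.Nat.sum_antidiagonal_succ, oddCentralBinom_succ, add_mul, sum_add_distrib,
        mul_assoc, ← mul_sum, oddCentralBinom_zero, centralBinom_zero]
      ring
    rw [hrec, mul_add, mul_left_comm, ih, sum_antidiagonal_centralBinom_mul_oddCentralBinom]
    ring

end Nat

theorem HasSum.of_sum_antidiagonal_of_nonneg {A : Type*} [AddMonoid A] [HasAntidiagonal A]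
    {f : A × A → ℝ} (hf : 0 ≤ f) {s : ℝ} (h : HasSum (fun n ↦ ∑ p ∈ antidiagonal n, f p) s) :
    HasSum f s := by
  have hfiber (n : A) : HasSum (fun p : antidiagonal n ↦ f p) (∑ p ∈ antidiagonal n, f p) :=
    (antidiagonal n).hasSum f
  refine HasAntidiagonal.sigmaAntidiagonalEquivProd.hasSum_iff.mp (h.sigma_of_hasSum hfiber ?_)
  refine (summable_sigma_of_nonneg fun _ ↦ hf _).mpr ⟨fun n ↦ (hfiber n).summable, ?_⟩
  simpa only [Function.comp_apply, HasAntidiagonal.sigmaAntidiagonalEquivProd_apply,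
    (hfiber _).tsum_eq] using h.summable

theorem hasSum_succ_mul_geometric_of_norm_lt_one {𝕜 : Type*} [NormedField 𝕜] [CompleteSpace 𝕜]
    {r : 𝕜} (hr : ‖r‖ < 1) : HasSum (fun n : ℕ ↦ (n + 1) * r ^ n) (1 / (1 - r) ^ 2) := by
  simpa using hasSum_choose_mul_geometric_of_norm_lt_one 1 hr

theorem evenDiagTerm_eq (q x : ℝ) (p : ℕ × ℕ) :
    evenDiagTerm q x p
      = q ^ (p.1 + p.2 + 1) / (((p.1 + p.2 : ℕ) + 1) * x ^ (2 * (p.1 + p.2) + 4))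
        * (p.1.oddCentralBinom * p.2.oddCentralBinom : ℕ) := by
  have hexp : -(2 * (p.1 : ℤ) + 2 * p.2 + 4) = -((2 * (p.1 + p.2) + 4 : ℕ) : ℤ) := by
    push_cast; ring
  rw [evenDiagTerm, hexp, zpow_neg, zpow_natCast, factorial_two_mul_add_one,
    factorial_two_mul_add_one]
  have := p.1.factorial_ne_zero
  have := p.2.factorial_ne_zero
  push_cast
  field_simp

theorem oddDiagTerm_eq (q x : ℝ) (p : ℕ × ℕ) :
    oddDiagTerm q x p
      = 4 * q ^ (p.1 + p.2 + 2) / (((p.1 + p.2 : ℕ) + 2) * x ^ (2 * (p.1 + p.2) + 6))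
        * (p.1.oddCentralBinom * p.2.oddCentralBinom : ℕ) := by
  have hexp : -(2 * ((p.1 : ℤ) + 1) + 2 * (p.2 + 1) + 2) = -((2 * (p.1 + p.2) + 6 : ℕ) : ℤ) := by
    push_cast; ring
  have h1 := congrArg (Nat.cast (R := ℝ)) (succ_mul_factorial_two_mul_succ p.1)
  have h2 := congrArg (Nat.cast (R := ℝ)) (succ_mul_factorial_two_mul_succ p.2)
  have := (p.1 + 1).factorial_ne_zero
  have := (p.2 + 1).factorial_ne_zero
  push_cast at h1 h2
  rw [oddDiagTerm, hexp, zpow_neg, zpow_natCast]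
  push_cast
  rw [show q ^ (p.1 + 1 + (p.2 + 1)) * (p.1 + 1 : ℝ) * (p.2 + 1) * (2 * (p.1 + 1))!
      * (2 * (p.2 + 1))!
      = q ^ (p.1 + p.2 + 2) * ((p.1 + 1) * (2 * (p.1 + 1))!) * ((p.2 + 1) * (2 * (p.2 + 1))!) by
      ring, h1, h2]
  field_simp
  ring

theorem sum_antidiagonal_cast_oddCentralBinom_mul (n : ℕ) :
    ∑ p ∈ antidiagonal n, ((p.1.oddCentralBinom * p.2.oddCentralBinom : ℕ) : ℝ)
      = (n + 1) * (n + 2) * 4 ^ n / 2 := by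
  rw [eq_div_iff two_ne_zero, mul_comm, ← Nat.cast_sum]
  exact_mod_cast two_mul_sum_antidiagonal_oddCentralBinom_mul n

section Rows

variable {q x : ℝ}

theorem sum_antidiagonal_evenDiagTerm (hx : x ≠ 0) (n : ℕ) :
    ∑ p ∈ antidiagonal n, evenDiagTerm q x p
      = q / (2 * x ^ 4) * ((n + 1) * (4 * q / x ^ 2) ^ n + (4 * q / x ^ 2) ^ n) := by
  rw [sum_congr rfl fun p hp ↦ by rw [evenDiagTerm_eq, mem_antidiagonal.mp hp], ← mul_sum,
    sum_antidiagonal_cast_oddCentralBinom_mul, div_pow]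
  field_simp
  ring

theorem sum_antidiagonal_oddDiagTerm (hx : x ≠ 0) (n : ℕ) :
    ∑ p ∈ antidiagonal n, oddDiagTerm q x p
      = 2 * q ^ 2 / x ^ 6 * ((n + 1) * (4 * q / x ^ 2) ^ n) := by
  rw [sum_congr rfl fun p hp ↦ by rw [oddDiagTerm_eq, mem_antidiagonal.mp hp], ← mul_sum,
    sum_antidiagonal_cast_oddCentralBinom_mul, div_pow]
  field_simp
  ring

theorem evenDiagTerm_nonneg (hq : 0 ≤ q) (hx : 0 ≤ x) : 0 ≤ evenDiagTerm q x := fun p ↦ by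
  unfold evenDiagTerm; positivity

theorem oddDiagTerm_nonneg (hq : 0 ≤ q) (hx : 0 ≤ x) : 0 ≤ oddDiagTerm q x := fun p ↦ by
  unfold oddDiagTerm; positivity

end Rows

/-- The diagonal value `W₀₂(x,x;q)` of the genus-zero two-point function equals
`q/(x²-4q)²`. -/
theorem two_point_series_diagonal (q x : ℝ) (hq : 0 < q) (hx : 2 * Real.sqrt q < x) :
    Summable (evenDiagTerm q x) ∧ Summable (oddDiagTerm q x) ∧
      (∑' p : ℕ × ℕ, evenDiagTerm q x p) + (∑' p : ℕ × ℕ, oddDiagTerm q x p) =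
        q / (x ^ 2 - 4 * q) ^ 2 := by
  have hx0 : 0 < x := (by positivity : 0 ≤ 2 * √q).trans_lt hx
  have h4q : 4 * q < x ^ 2 := by
    have := Real.sq_sqrt hq.le
    nlinarith [Real.sqrt_nonneg q]
  set r := 4 * q / x ^ 2 with hr_def
  have hr0 : 0 ≤ r := by positivity
  have hr1 : r < 1 := (div_lt_one (by positivity)).mpr h4q
  have hgeom := hasSum_geometric_of_lt_one hr0 hr1
  have hsucc := hasSum_succ_mul_geometric_of_norm_lt_one (by rwa [Real.norm_of_nonneg hr0])
  have hEven : HasSum (evenDiagTerm q x) (q / (2 * x ^ 4) * (1 / (1 - r) ^ 2 + (1 - r)⁻¹)) :=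
    .of_sum_antidiagonal_of_nonneg (evenDiagTerm_nonneg hq.le hx0.le) <| by
      simpa only [sum_antidiagonal_evenDiagTerm hx0.ne'] using (hsucc.add hgeom).mul_left _
  have hOdd : HasSum (oddDiagTerm q x) (2 * q ^ 2 / x ^ 6 * (1 / (1 - r) ^ 2)) :=
    .of_sum_antidiagonal_of_nonneg (oddDiagTerm_nonneg hq.le hx0.le) <| by
      simpa only [sum_antidiagonal_oddDiagTerm hx0.ne'] using hsucc.mul_left _
  refine ⟨hEven.summable, hOdd.summable, ?_⟩
  rw [hEven.tsum_eq, hOdd.tsum_eq, hr_def]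
  have : x ^ 2 - 4 * q ≠ 0 := by linarith
  field_simp
  ring
end

section
/- Let g ≥ 1 be an integer and let t be a real number with 0 ≤ t < 1/4. Then ∑_{d=0}^∞ ((2g−1+2d)!/(d!)²)·t^d = (2g−1)!·(1−4t)^{−(4g−1)/2} · ∑_{j=0}^{g−1} ((2g−1)!/((2g−1−2j)!·(j!)²))·t^j. -/
/-!
Write `m = 2g - 1`. By the binomial series, for `|4t| < 1`,
`(1 - 4t)^(-(m + 1/2)) = ∑ₖ 4ᵏ·multichoose (m + 1/2) k·tᵏ`. Its Cauchy product with the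
polynomial `∑ⱼ m!/((m - 2j)!·(j!)²)·tʲ` has coefficients `Sₙ` satisfying
`(n + 1)²·Sₙ₊₁ = (m + 2n + 1)(m + 2n + 2)·Sₙ`, which is also the recurrence of
`(m + 2n)!/(m!·(n!)²)`. Writing all three coefficient sequences as Pochhammer quotients, this
recurrence holds for every real `m`.
-/

open Finset

theorem Real.summable_norm_multichoose_mul_pow {a x : ℝ} (hx : |x| < 1) :
    Summable (fun n ↦ ‖Ring.multichoose a n * x ^ n‖) := by
  have hball : x ∈ Metric.eball (0 : ℝ) 1 := by
    simpa [mem_eball_zero_iff, ← ofReal_norm] using hx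
  have h := FormalMultilinearSeries.summable_norm_apply _
    (Metric.eball_subset_eball (Real.one_div_one_sub_rpow_hasFPowerSeriesOnBall_zero a).r_le hball)
  simpa only [FormalMultilinearSeries.ofScalars_apply_eq, smul_eq_mul, Ring.multichoose_eq] using h

theorem Real.hasSum_multichoose_mul_pow {a x : ℝ} (hx : |x| < 1) :
    HasSum (fun n ↦ Ring.multichoose a n * x ^ n) ((1 - x) ^ (-a)) := by
  have hball : x ∈ Metric.eball (0 : ℝ) 1 := by
    simpa [mem_eball_zero_iff, ← ofReal_norm] using hx
  have h := (Real.one_div_one_sub_rpow_hasFPowerSeriesOnBall_zero a).hasSum hball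
  simp only [FormalMultilinearSeries.ofScalars_apply_eq, smul_eq_mul, zero_add] at h
  rw [Real.rpow_neg (by linarith [abs_lt.1 hx]), ← one_div]
  simpa only [Ring.multichoose_eq] using h

theorem Ring.multichoose_succ_mul {K : Type*} [Field K] [CharZero K] (a : K) (n : ℕ) :
    (n + 1) * Ring.multichoose a (n + 1) = (a + n) * Ring.multichoose a n := by
  have pochhammer (k : ℕ) :
      (k.factorial : K) * Ring.multichoose a k = (ascPochhammer K k).eval a := by
    rw [← nsmul_eq_mul, Ring.factorial_nsmul_multichoose_eq_ascPochhammer,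
      Polynomial.ascPochhammer_smeval_eq_eval]
  have h := pochhammer (n + 1)
  rw [ascPochhammer_succ_eval, ← pochhammer n, Nat.factorial_succ] at h
  have hn : (n.factorial : K) ≠ 0 := by exact_mod_cast n.factorial_ne_zero
  apply mul_left_cancel₀ hn
  push_cast at h
  linear_combination h

theorem hasSum_sum_antidiagonal_mul_pow_of_eq_zero {R : Type*} [NormedCommRing R]
    [CompleteSpace R] {a b : ℕ → R} {t B : R} {N : ℕ} (ha : ∀ j, N ≤ j → a j = 0)
    (hb : HasSum (fun k ↦ b k * t ^ k) B) (hb_norm : Summable fun k ↦ ‖b k * t ^ k‖) :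
    HasSum (fun n ↦ (∑ p ∈ antidiagonal n, a p.1 * b p.2) * t ^ n)
      ((∑ j ∈ range N, a j * t ^ j) * B) := by
  have ha' : ∀ j ∉ range N, a j * t ^ j = 0 := fun j hj ↦ by
    rw [ha j (by simpa using hj), zero_mul]
  have ha_norm : Summable fun j ↦ ‖a j * t ^ j‖ :=
    summable_of_ne_finset_zero fun j hj ↦ by rw [ha' j hj, norm_zero]
  have h := (summable_norm_sum_mul_antidiagonal_of_summable_norm ha_norm hb_norm).of_norm.hasSum
  rw [← tsum_mul_tsum_eq_tsum_sum_antidiagonal_of_summable_norm ha_norm hb_norm, tsum_eq_sum ha',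
    hb.tsum_eq] at h
  refine h.congr_fun fun n ↦ ?_
  rw [sum_mul]
  refine sum_congr rfl fun p hp ↦ ?_
  rw [← mem_antidiagonal.1 hp, pow_add]
  ring

namespace OnePointGenus

noncomputable def polyCoeff (x : ℝ) (j : ℕ) : ℝ :=
  (descPochhammer ℝ (2 * j)).eval x / (j.factorial : ℝ) ^ 2

noncomputable def rootCoeff (x : ℝ) (k : ℕ) : ℝ :=
  4 ^ k * Ring.multichoose (x + 1 / 2) k

noncomputable def seriesCoeff (x : ℝ) (d : ℕ) : ℝ :=
  (ascPochhammer ℝ (2 * d)).eval (x + 1) / (d.factorial : ℝ) ^ 2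

@[simp] lemma polyCoeff_zero (x : ℝ) : polyCoeff x 0 = 1 := by simp [polyCoeff]

@[simp] lemma rootCoeff_zero (x : ℝ) : rootCoeff x 0 = 1 := by simp [rootCoeff]

@[simp] lemma seriesCoeff_zero (x : ℝ) : seriesCoeff x 0 = 1 := by simp [seriesCoeff]

lemma polyCoeff_succ (x : ℝ) (j : ℕ) :
    ((j : ℝ) + 1) ^ 2 * polyCoeff x (j + 1) = (x - 2 * j) * (x - 2 * j - 1) * polyCoeff x j := by
  have hj : (j.factorial : ℝ) ≠ 0 := by exact_mod_cast j.factorial_ne_zero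
  rw [polyCoeff, polyCoeff, show 2 * (j + 1) = 2 * j + 1 + 1 by ring, descPochhammer_succ_eval,
    descPochhammer_succ_eval, Nat.factorial_succ]
  push_cast
  field_simp
  ring

lemma rootCoeff_succ (x : ℝ) (k : ℕ) :
    ((k : ℝ) + 1) * rootCoeff x (k + 1) = (4 * k + 4 * x + 2) * rootCoeff x k := by
  have h := Ring.multichoose_succ_mul (x + 1 / 2) k
  rw [rootCoeff, rootCoeff, pow_succ]
  linear_combination 4 ^ (k + 1) * h

lemma seriesCoeff_succ (x : ℝ) (d : ℕ) :
    ((d : ℝ) + 1) ^ 2 * seriesCoeff x (d + 1) =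
      (x + 2 * d + 1) * (x + 2 * d + 2) * seriesCoeff x d := by
  have hd : (d.factorial : ℝ) ≠ 0 := by exact_mod_cast d.factorial_ne_zero
  rw [seriesCoeff, seriesCoeff, show 2 * (d + 1) = 2 * d + 1 + 1 by ring, ascPochhammer_succ_eval,
    ascPochhammer_succ_eval, Nat.factorial_succ]
  push_cast
  field_simp
  ring

lemma sq_mul_sum_antidiagonal_succ (x : ℝ) (n : ℕ) :
    ((n : ℝ) + 1) ^ 2 * ∑ p ∈ antidiagonal (n + 1), polyCoeff x p.1 * rootCoeff x p.2 =
      (x + 2 * n + 1) * (x + 2 * n + 2) *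
        ∑ p ∈ antidiagonal n, polyCoeff x p.1 * rootCoeff x p.2 := by
  -- On `i + k = n + 1`, `(n + 1)² = (n + 1 + i)·k + i²`: the factor `k` lowers `rootCoeff x k`
  -- and `i²` lowers `polyCoeff x i` by their recurrences.
  have split :
      ((n : ℝ) + 1) ^ 2 * ∑ p ∈ antidiagonal (n + 1), polyCoeff x p.1 * rootCoeff x p.2 =
        ∑ p ∈ antidiagonal (n + 1), (n + 1 + p.1) * polyCoeff x p.1 * (p.2 * rootCoeff x p.2) +
          ∑ p ∈ antidiagonal (n + 1), (p.1 ^ 2 * polyCoeff x p.1) * rootCoeff x p.2 := by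
    rw [mul_sum, ← sum_add_distrib]
    refine sum_congr rfl fun p hp ↦ ?_
    have hp : (p.1 : ℝ) + p.2 = n + 1 := by exact_mod_cast mem_antidiagonal.1 hp
    linear_combination (-(n + 1 + p.1) * polyCoeff x p.1 * rootCoeff x p.2) * hp
  have lower_root :
      ∑ p ∈ antidiagonal (n + 1), (n + 1 + p.1) * polyCoeff x p.1 * (p.2 * rootCoeff x p.2) =
        ∑ p ∈ antidiagonal n,
          (n + 1 + p.1) * (4 * p.2 + 4 * x + 2) * polyCoeff x p.1 * rootCoeff x p.2 := by
    rw [Nat.sum_antidiagonal_succ']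
    simp only [Nat.cast_zero, zero_mul, mul_zero, zero_add, Nat.cast_succ, rootCoeff_succ]
    exact sum_congr rfl fun p _ ↦ by ring
  have lower_poly :
      ∑ p ∈ antidiagonal (n + 1), (p.1 ^ 2 * polyCoeff x p.1) * rootCoeff x p.2 =
        ∑ p ∈ antidiagonal n,
          (x - 2 * p.1) * (x - 2 * p.1 - 1) * polyCoeff x p.1 * rootCoeff x p.2 := by
    rw [Nat.sum_antidiagonal_succ]
    simp only [Nat.cast_zero, ne_eq, OfNat.ofNat_ne_zero, not_false_eq_true, zero_pow, zero_mul,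
      zero_add, Nat.cast_succ, polyCoeff_succ]
  rw [split, lower_root, lower_poly, ← sum_add_distrib, mul_sum]
  refine sum_congr rfl fun p hp ↦ ?_
  have hp : (p.1 : ℝ) + p.2 = n := by exact_mod_cast mem_antidiagonal.1 hp
  linear_combination (4 * (n + 1 + p.1) * polyCoeff x p.1 * rootCoeff x p.2) * hp

theorem sum_antidiagonal_polyCoeff_mul_rootCoeff (x : ℝ) (n : ℕ) :
    ∑ p ∈ antidiagonal n, polyCoeff x p.1 * rootCoeff x p.2 = seriesCoeff x n := by
  induction n with
  | zero => simp
  | succ n ih =>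
    apply mul_left_cancel₀ (by positivity : ((n : ℝ) + 1) ^ 2 ≠ 0)
    rw [sq_mul_sum_antidiagonal_succ, ih, seriesCoeff_succ]

lemma polyCoeff_natCast_of_lt {m j : ℕ} (h : m < 2 * j) : polyCoeff m j = 0 := by
  rw [polyCoeff, descPochhammer_eval_eq_descFactorial, Nat.descFactorial_eq_zero_iff_lt.2 h,
    Nat.cast_zero, zero_div]

lemma polyCoeff_natCast {m j : ℕ} (h : 2 * j ≤ m) :
    polyCoeff m j = m.factorial / ((m - 2 * j).factorial * (j.factorial : ℝ) ^ 2) := by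
  have hm : ((m - 2 * j).factorial : ℝ) ≠ 0 := by exact_mod_cast (m - 2 * j).factorial_ne_zero
  rw [polyCoeff, descPochhammer_eval_eq_descFactorial, ← Nat.factorial_mul_descFactorial h,
    Nat.cast_mul, mul_div_mul_left _ _ hm]

lemma factorial_mul_seriesCoeff_natCast (m d : ℕ) :
    m.factorial * seriesCoeff m d = (m + 2 * d).factorial / (d.factorial : ℝ) ^ 2 := by
  rw [seriesCoeff, ← Nat.cast_succ, ← ascPochhammer_eval_cast,
    ascPochhammer_nat_eq_ascFactorial, ← Nat.factorial_mul_ascFactorial, Nat.cast_mul,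
    mul_div_assoc]

lemma rootCoeff_mul_pow (x t : ℝ) (k : ℕ) :
    rootCoeff x k * t ^ k = Ring.multichoose (x + 1 / 2) k * (4 * t) ^ k := by
  rw [rootCoeff, mul_pow]
  ring

theorem hasSum_seriesCoeff_mul_pow {m N : ℕ} (hN : m < 2 * N) {t : ℝ} (ht : |4 * t| < 1) :
    HasSum (fun d ↦ seriesCoeff m d * t ^ d)
      ((1 - 4 * t) ^ (-(m + 1 / 2 : ℝ)) * ∑ j ∈ range N, polyCoeff m j * t ^ j) := by
  have hroot : HasSum (fun k ↦ rootCoeff m k * t ^ k) ((1 - 4 * t) ^ (-(m + 1 / 2 : ℝ))) := by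
    simpa only [rootCoeff_mul_pow] using Real.hasSum_multichoose_mul_pow ht
  have hroot_norm : Summable fun k ↦ ‖rootCoeff m k * t ^ k‖ := by
    simpa only [rootCoeff_mul_pow] using Real.summable_norm_multichoose_mul_pow ht
  have hpoly (j : ℕ) (hj : N ≤ j) : polyCoeff m j = 0 := polyCoeff_natCast_of_lt (by omega)
  rw [mul_comm]
  simpa only [sum_antidiagonal_polyCoeff_mul_rootCoeff] using
    hasSum_sum_antidiagonal_mul_pow_of_eq_zero hpoly hroot hroot_norm

end OnePointGenus

open OnePointGenus in
/-- The genus-`g` part of the one-point function of stationary GW invariants of ℙ¹: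
`∑_{d=0}^∞ ((2g-1+2d)!/(d!)²)·t^d
  = (2g-1)!·(1-4t)^{-(4g-1)/2}·∑_{j=0}^{g-1} ((2g-1)!/((2g-1-2j)!(j!)²))·t^j`. -/
theorem one_point_genus_g (g : ℕ) (hg : 1 ≤ g) (t : ℝ) (h0 : 0 ≤ t) (h1 : t < 1 / 4) :
    HasSum
      (fun d : ℕ =>
        ((Nat.factorial (2 * g - 1 + 2 * d) : ℝ) / ((Nat.factorial d : ℝ)) ^ 2) * t ^ d)
      ((Nat.factorial (2 * g - 1) : ℝ) * (1 - 4 * t) ^ (-((4 * (g : ℝ) - 1) / 2)) *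
        ∑ j ∈ Finset.range g,
          ((Nat.factorial (2 * g - 1) : ℝ) /
              ((Nat.factorial (2 * g - 1 - 2 * j) : ℝ) * ((Nat.factorial j : ℝ)) ^ 2)) *
            t ^ j) := by
  have ht : |4 * t| < 1 := abs_lt.2 ⟨by linarith, by linarith⟩
  have hexp : ((2 * g - 1 : ℕ) : ℝ) + 1 / 2 = (4 * g - 1) / 2 := by
    rw [Nat.cast_sub (by omega)]
    push_cast
    ring
  have h := (hasSum_seriesCoeff_mul_pow (m := 2 * g - 1) (N := g) (by omega) ht).mul_left
    ((2 * g - 1).factorial : ℝ)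
  rw [hexp, sum_congr rfl fun j hj ↦ by rw [polyCoeff_natCast (by simp at hj; omega)]] at h
  rw [mul_assoc]
  refine h.congr_fun fun d ↦ ?_
  rw [← mul_assoc, factorial_mul_seriesCoeff_natCast]
end
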